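/- arXiv:2110.10367 — 3 statements merged into one kernel-verified Lean document; each statement's English description precedes it below -/
import Mathlib

section
/- Let n be a positive integer, and let m1 = 2r+1 and m2 = 2s+1 be odd positive integers. Suppose (X^j = (x_1^j, …, x_{2r+1}^j) : j = 1, …, n) is a PDM(n, 2r+1) (rows indexed by j) and (Y^j = (y_1^j, …, y_{2s+1}^j) : j = 1, …, n) is a PDM(n, 2s+1). Define the n×(2r+1)(2s+1) matrix Z by z^j_{(i−1)(2s+1)+h} = (2s+1)·x_i^j + y_h^j for 1 ≤ i ≤ 2r+1 and 1 ≤ h ≤ 2s+1. Then Z is a PDM(n, (2r+1)(2s+1)). -/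
/-- For odd `m = 2r+1`, the set `I_m = {-r, …, r}`. -/
noncomputable def Iset (m : ℕ) : Finset ℤ := Finset.Icc (-(((m : ℤ) - 1) / 2)) (((m : ℤ) - 1) / 2)

/-- `f` comprises all elements of `S` exactly once (entries from `S`,
each element of `S` appearing exactly once). -/
def rowPerfect {ι : Type*} (S : Finset ℤ) (f : ι → ℤ) : Prop :=
  (∀ j, f j ∈ S) ∧ ∀ z ∈ S, ∃! j, f j = z

/-- `D` is a perfect difference matrix based on the set `S`: every row
comprises all elements of `S` exactly once, and the componentwise differences
of any two distinct rows comprise all elements of `S` exactly once. -/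
def IsPDMOn {n : ℕ} {ι : Type*} (S : Finset ℤ) (D : Fin n → ι → ℤ) : Prop :=
  (∀ i, rowPerfect S (D i)) ∧
  ∀ s t : Fin n, s < t → rowPerfect S (fun j => D t j - D s j)

/-- There exists a `PDM(n,m)`. -/
def PDMexists (n m : ℕ) : Prop := ∃ D : Fin n → Fin m → ℤ, IsPDMOn (Iset m) D

/-- There exists an `SIPDM(n,m,1)` (standard incomplete PDM with hole `{0}`). -/
def SIPDMexists (n m : ℕ) : Prop :=
  ∃ D : Fin n → Fin (m - 1) → ℤ, IsPDMOn (Iset m \ {0}) D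

/-- Directed list of differences of a block, as a multiset. -/
def deltaB (B : Finset ℤ) : Multiset ℤ :=
  ((B ×ˢ B).filter (fun p => p.2 < p.1)).val.map (fun p => p.1 - p.2)

/-- Directed list of differences of a family of blocks. -/
def deltaFam {t : ℕ} (B : Fin t → Finset ℤ) : Multiset ℤ :=
  (Finset.univ.val : Multiset (Fin t)).bind (fun i => deltaB (B i))

/-- A `(v,4,1)`-PDP with `t` blocks covering `H ⊆ [1,(v-1)/2]`: the directed
differences of the blocks cover each element of `H` exactly once and nothing else. -/
def IsPDP4 (v t : ℕ) (B : Fin t → Finset ℤ) (H : Finset ℤ) : Prop :=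
  (∀ i, (B i).card = 4) ∧ H ⊆ Finset.Icc 1 (((v : ℤ) - 1) / 2) ∧ deltaFam B = H.val

/-!
Balanced mixed-radix representation: every integer `z` with `|z| ≤ ((2r+1)(2s+1) - 1)/2` is
uniquely `(2s+1)·a + b` with `|a| ≤ r` and `|b| ≤ s`. Hence `(i, h) ↦ (2s+1)·x_i + y_h` runs through
`I_{(2r+1)(2s+1)}` exactly once whenever `x` runs through `I_{2r+1}` and `y` through `I_{2s+1}`, and
this applies both to the rows of `Z` and, since `z^t - z^s = (2s+1)(x^t - x^s) + (y^t - y^s)`,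
to the differences of its rows.
-/

open Set

theorem rowPerfect_iff_bijOn {ι : Type*} {S : Finset ℤ} {f : ι → ℤ} :
    rowPerfect S f ↔ BijOn f univ S := by
  refine ⟨fun hf => ⟨fun j _ => hf.1 j, fun i _ j _ hij => ?_, fun z hz => ?_⟩,
    fun hf => ⟨fun j => hf.mapsTo trivial, fun z hz => ?_⟩⟩
  · exact (hf.2 _ (hf.1 j)).unique hij rfl
  · obtain ⟨j, hj, -⟩ := hf.2 z hz
    exact ⟨j, trivial, hj⟩
  · obtain ⟨j, -, rfl⟩ := hf.surjOn hz
    exact ⟨j, rfl, fun k hk => hf.injOn trivial trivial hk⟩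

theorem rowPerfect.comp_prodMap {ι κ : Type*} {S T U : Finset ℤ} {f : ι → ℤ} {g : κ → ℤ}
    {φ : ℤ × ℤ → ℤ} (hf : rowPerfect S f) (hg : rowPerfect T g)
    (hφ : BijOn φ (S ×ˢ T : Set (ℤ × ℤ)) U) : rowPerfect U (φ ∘ Prod.map f g) := by
  rw [rowPerfect_iff_bijOn] at *
  have h := hφ.comp (hf.prodMap hg)
  rwa [univ_prod_univ] at h

theorem rowPerfect.comp_equiv {ι κ : Type*} {S : Finset ℤ} {f : κ → ℤ} (hf : rowPerfect S f)
    (e : ι ≃ κ) : rowPerfect S (f ∘ e) := by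
  rw [rowPerfect_iff_bijOn] at *
  exact hf.comp (bijOn_univ.2 e.bijective)

theorem mem_Iset_two_mul_add_one {r : ℕ} {z : ℤ} :
    z ∈ Iset (2 * r + 1) ↔ -(r : ℤ) ≤ z ∧ z ≤ r := by
  have hr : (((2 * r + 1 : ℕ) : ℤ) - 1) / 2 = r := by omega
  rw [Iset, hr, Finset.mem_Icc]

theorem Iset_mul_eq (r s : ℕ) :
    Iset ((2 * r + 1) * (2 * s + 1)) = Iset (2 * (2 * r * s + r + s) + 1) := by
  congr 1; ring

theorem bijOn_mul_add_Iset (r s : ℕ) :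
    BijOn (fun p : ℤ × ℤ => (2 * s + 1) * p.1 + p.2)
      (Iset (2 * r + 1) ×ˢ Iset (2 * s + 1) : Set (ℤ × ℤ)) (Iset ((2 * r + 1) * (2 * s + 1))) := by
  simp only [BijOn, MapsTo, InjOn, SurjOn, subset_def, Iset_mul_eq, Finset.mem_coe, mem_prod,
    mem_image, mem_Iset_two_mul_add_one, Prod.forall, Prod.exists, Prod.mk.injEq]
  refine ⟨fun a b ⟨⟨ha, ha'⟩, hb, hb'⟩ => ?_, fun a b ⟨_, hb, hb'⟩ a' b' ⟨_, hc, hc'⟩ h => ?_,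
    fun z hz => ?_⟩
  · push_cast
    constructor <;> nlinarith
  · -- `b' - b` is a multiple of `2s+1` of absolute value at most `2s`
    have hdvd : (2 * (s : ℤ) + 1) ∣ b' - b := ⟨a - a', by linarith⟩
    have hbb : b' - b = 0 := Int.eq_zero_of_abs_lt_dvd hdvd (abs_lt.2 ⟨by omega, by omega⟩)
    refine ⟨?_, by omega⟩
    have : (2 * (s : ℤ) + 1) * (a - a') = 0 := by linarith
    simpa [sub_eq_zero, show (2 * (s : ℤ) + 1) ≠ 0 by omega] using this
  · -- `a` is the floor quotient of `z + s` by `2s+1`, so that `b = z - (2s+1)a` lies in `[-s, s]`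
    have hm : (0 : ℤ) < 2 * s + 1 := by omega
    have hdiv := Int.mul_ediv_add_emod (z + s) (2 * s + 1)
    have hrem := Int.emod_nonneg (z + s) hm.ne'
    have hrem' := Int.emod_lt_of_pos (z + s) hm
    set a := (z + s) / (2 * s + 1)
    push_cast at hz
    refine ⟨a, z - (2 * s + 1) * a, ⟨⟨?_, ?_⟩, by omega, by omega⟩, by ring⟩
    · by_contra! ha
      nlinarith [mul_le_mul_of_nonneg_left (show a + 1 ≤ -r by omega) hm.le]
    · by_contra! ha
      nlinarith [mul_le_mul_of_nonneg_left (show (r : ℤ) + 1 ≤ a by omega) hm.le]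

theorem rowPerfect_of_mul_add {ι κ ν : Type*} {r s : ℕ} {f : ι → ℤ} {g : κ → ℤ} {h : ν → ℤ}
    (hf : rowPerfect (Iset (2 * r + 1)) f) (hg : rowPerfect (Iset (2 * s + 1)) g)
    (e : ι × κ ≃ ν) (hh : ∀ i j, h (e (i, j)) = (2 * s + 1) * f i + g j) :
    rowPerfect (Iset ((2 * r + 1) * (2 * s + 1))) h := by
  convert (hf.comp_prodMap hg (bijOn_mul_add_Iset r s)).comp_equiv e.symm using 1
  funext k
  obtain ⟨⟨i, j⟩, rfl⟩ := e.surjective k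
  simp [hh]

/-- Theorem 2.1, product construction for PDMs.
If `X` is a `PDM(n, 2r+1)` and `Y` is a `PDM(n, 2s+1)`, then the `n × (2r+1)(2s+1)`
matrix `Z` with `z^j_{(i-1)(2s+1)+h} = (2s+1)·x_i^j + y_h^j` is a
`PDM(n, (2r+1)(2s+1))`. -/
theorem stmt0 (n r s : ℕ)
    (X : Fin n → Fin (2 * r + 1) → ℤ) (Y : Fin n → Fin (2 * s + 1) → ℤ)
    (hX : IsPDMOn (Iset (2 * r + 1)) X) (hY : IsPDMOn (Iset (2 * s + 1)) Y)
    (Z : Fin n → Fin ((2 * r + 1) * (2 * s + 1)) → ℤ)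
    (hZ : ∀ (j : Fin n) (i : Fin (2 * r + 1)) (h : Fin (2 * s + 1)),
      Z j ⟨i.val * (2 * s + 1) + h.val, by
        calc i.val * (2 * s + 1) + h.val < i.val * (2 * s + 1) + (2 * s + 1) := by omega
          _ = (i.val + 1) * (2 * s + 1) := by ring
          _ ≤ (2 * r + 1) * (2 * s + 1) := Nat.mul_le_mul_right _ i.isLt⟩ =
        (2 * (s : ℤ) + 1) * X j i + Y j h) :
    IsPDMOn (Iset ((2 * r + 1) * (2 * s + 1))) Z := by
  have hZ' (j : Fin n) (i : Fin (2 * r + 1)) (h : Fin (2 * s + 1)) :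
      Z j (finProdFinEquiv (i, h)) = (2 * (s : ℤ) + 1) * X j i + Y j h :=
    (congrArg (Z j) (Fin.ext (by simp only [finProdFinEquiv_apply_val]; ring))).trans (hZ j i h)
  refine ⟨fun j => ?_, fun a b hab => ?_⟩
  · exact rowPerfect_of_mul_add (hX.1 j) (hY.1 j) finProdFinEquiv (hZ' j)
  · exact rowPerfect_of_mul_add (hX.2 a b hab) (hY.2 a b hab) finProdFinEquiv
      fun i h => by simp only [hZ']; ring
end

section
/- There exists no SIPDM(3,5,1) and there exists no SIPDM(3,7,1). That is, for m ∈ {5,7} there is no 3×(m−1) integer matrix with entries from I_m \ {0} such that the entries of each row comprise all elements of I_m \ {0} exactly once and, for each pair of distinct rows, the componentwise differences comprise all elements of I_m \ {0} exactly once. -/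
/-!
Every column `(a, b, c)` of a three-row SIPDM has all six values `a, b, c, b - a, c - a, c - b`
in `I_m \ {0}`, and each of these six rows runs through `I_m \ {0}` once; so summing
`a² + b² + c² + (b - a)² + (c - a)² + (c - b)²` over the columns gives `6 · ∑_{z ∈ I_m \ {0}} z²`.
For `m = 5` no admissible column exists: three distinct nonzero values in `[-2, 2]` at pairwise
distance at most `2` would be consecutive and so contain `0`. For `m = 7` the admissible columns
are, up to order and sign, `{1, 2, 3}` and `{-1, 1, 2}`, each contributing exactly `20`, whereas
the six columns must contribute `6 · 28` in total.
-/

def AdmissibleColumn (S : Finset ℤ) (a b c : ℤ) : Prop :=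
  a ∈ S ∧ b ∈ S ∧ c ∈ S ∧ b - a ∈ S ∧ c - a ∈ S ∧ c - b ∈ S

def sixSquares (a b c : ℤ) : ℤ :=
  a ^ 2 + b ^ 2 + c ^ 2 + (b - a) ^ 2 + (c - a) ^ 2 + (c - b) ^ 2

theorem rowPerfect.sum_comp {ι : Type*} [Fintype ι] {S : Finset ℤ} {f : ι → ℤ}
    (h : rowPerfect S f) (g : ℤ → ℤ) : ∑ j, g (f j) = ∑ z ∈ S, g z := by
  refine Finset.sum_nbij f (fun j _ => h.1 j) (fun j _ j' _ hjj => ?_) (fun z hz => ?_)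
    (fun _ _ => rfl)
  · exact (h.2 (f j) (h.1 j)).unique rfl hjj.symm
  · obtain ⟨j, hj, _⟩ := h.2 z hz
    exact ⟨j, Finset.mem_coe.2 (Finset.mem_univ j), hj⟩

section ThreeRows

variable {ι : Type*} {S : Finset ℤ} {D : Fin 3 → ι → ℤ}

theorem IsPDMOn.admissibleColumn (hD : IsPDMOn S D) (j : ι) :
    AdmissibleColumn S (D 0 j) (D 1 j) (D 2 j) :=
  ⟨(hD.1 0).1 j, (hD.1 1).1 j, (hD.1 2).1 j, (hD.2 0 1 (by decide)).1 j,
    (hD.2 0 2 (by decide)).1 j, (hD.2 1 2 (by decide)).1 j⟩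

theorem IsPDMOn.sum_sixSquares [Fintype ι] (hD : IsPDMOn S D) :
    ∑ j, sixSquares (D 0 j) (D 1 j) (D 2 j) = 6 * ∑ z ∈ S, z ^ 2 := by
  have h (f : ι → ℤ) (hf : rowPerfect S f) : ∑ j, f j ^ 2 = ∑ z ∈ S, z ^ 2 :=
    hf.sum_comp (· ^ 2)
  simp only [sixSquares, Finset.sum_add_distrib, h _ (hD.1 0), h _ (hD.1 1), h _ (hD.1 2),
    h _ (hD.2 0 1 (by decide)), h _ (hD.2 0 2 (by decide)), h _ (hD.2 1 2 (by decide))]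
  ring

end ThreeRows

theorem not_admissibleColumn_five (a b c : ℤ) : ¬ AdmissibleColumn (Iset 5 \ {0}) a b c := by
  rintro ⟨ha, hb, hc, hba, hca, hcb⟩
  simp only [Iset, Finset.mem_sdiff, Finset.mem_Icc, Finset.mem_singleton] at *
  omega

theorem AdmissibleColumn.sixSquares_eq_twenty {a b c : ℤ}
    (h : AdmissibleColumn (Iset 7 \ {0}) a b c) : sixSquares a b c = 20 := by
  have key : ∀ a ∈ Iset 7 \ {0}, ∀ b ∈ Iset 7 \ {0}, ∀ c ∈ Iset 7 \ {0},
      AdmissibleColumn (Iset 7 \ {0}) a b c → sixSquares a b c = 20 := by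
    unfold AdmissibleColumn sixSquares
    decide
  exact key a h.1 b h.2.1 c h.2.2.1 h

/-- Lemma 2.4.  There exist no `SIPDM(3,5,1)` and no `SIPDM(3,7,1)`. -/
theorem stmt3 : ¬ SIPDMexists 3 5 ∧ ¬ SIPDMexists 3 7 := by
  constructor
  · rintro ⟨D, hD⟩
    exact not_admissibleColumn_five _ _ _ (hD.admissibleColumn 0)
  · rintro ⟨D, hD⟩
    have h := hD.sum_sixSquares
    simp only [fun j => (hD.admissibleColumn j).sixSquares_eq_twenty] at h
    -- `6 · 20 = 120` on the left, `6 · 28 = 168` on the right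
    revert h
    decide
end

section
/- If there exists a (g, W, 1)-PDF with exactly q_w·M blocks of size w for each w ∈ W (where M is the total number of blocks and Q records these proportions), then there exists a perfect (g, W, 1, Q)-NCW-SOOC with M codewords; in particular, the blocks of the PDF, translated into subsets of {1, …, g}, form an (g, W, 1, Q)-NCW-SOOC of minimum possible length g among all NCW-SOOCs with M codewords and the same multiset of weights. -/
/-- An `(n,W,1,Q)`-NCW-SOOC with `M` codewords: codewords are subsets of
`{1, …, n}` with weights in `W`; for each `w ∈ W` the number of codewords of
weight `w` is `Q w · M` (weight distribution); the quantities
`d^i_{jk} = c^i_k - c^i_j - 1` (equivalently the directed differences) are pairwise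
distinct within each codeword and between distinct codewords (auto/cross
correlation `1`); and `n ≥ 2D + 3` where `D` is the maximal `d^i_{jk}`. -/
def IsNCWSOOC (n : ℕ) (W : Finset ℕ) (Q : ℕ → ℚ) (M : ℕ)
    (C : Fin M → Finset ℤ) : Prop :=
  (∀ i, C i ⊆ Finset.Icc 1 (n : ℤ)) ∧
  (∀ i, (C i).card ∈ W) ∧
  (∀ w ∈ W, ((Finset.univ.filter (fun i => (C i).card = w)).card : ℚ) = Q w * M) ∧
  (deltaFam C).Nodup ∧
  (∀ d ∈ deltaFam C, 2 * (d - 1) + 3 ≤ (n : ℤ))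

/-! Translating each block of the PDF so that its least element is `1` changes no difference,
and a block whose differences are at most `(g - 1) / 2` then lies in `{1, …, g}`.
For minimality, a block of size `w` has `w.choose 2` differences, so the number of differences
of a code is fixed by its weight distribution; in a code of length `n` they are distinct integers
in `[1, (n - 1) / 2]`, whence `(g - 1) / 2 ≤ (n - 1) / 2`, and `g ≤ n` as `g` is odd. -/

open Finset

theorem mem_deltaB {C : Finset ℤ} {d : ℤ} :
    d ∈ deltaB C ↔ ∃ a ∈ C, ∃ b ∈ C, b < a ∧ a - b = d := by
  simp only [deltaB, Multiset.mem_map, mem_val, mem_filter, mem_product, Prod.exists]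
  grind

theorem mem_deltaFam {t : ℕ} {C : Fin t → Finset ℤ} {d : ℤ} :
    d ∈ deltaFam C ↔ ∃ i, d ∈ deltaB (C i) := by
  simp [deltaFam]

theorem card_deltaB (C : Finset ℤ) : Multiset.card (deltaB C) = C.card.choose 2 := by
  rw [deltaB, Multiset.card_map, ← card_product_filter_lt (s := C)]
  exact card_equiv (Equiv.prodComm ℤ ℤ) (by simp [and_comm])

theorem deltaB_image_add_right (C : Finset ℤ) (z : ℤ) :
    deltaB (C.image (· + z)) = deltaB C := by
  have h : C.image (· + z) ×ˢ C.image (· + z) =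
      (C ×ˢ C).map ((addRightEmbedding z).prodMap (addRightEmbedding z)) := by
    rw [prodMap_map_product, map_eq_image]; rfl
  rw [deltaB, deltaB, h, filter_map, map_val, Multiset.map_map]
  simp [Function.comp_def]

theorem deltaFam_image_add_right {t : ℕ} (C : Fin t → Finset ℤ) (z : Fin t → ℤ) :
    deltaFam (fun i => (C i).image (· + z i)) = deltaFam C := by
  simp only [deltaFam, deltaB_image_add_right]

theorem card_deltaFam {t : ℕ} (C : Fin t → Finset ℤ) :
    Multiset.card (deltaFam C) = ∑ i, (C i).card.choose 2 := by
  simp only [deltaFam, Multiset.card_bind, Function.comp_def, card_deltaB]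
  rfl

theorem card_deltaFam_eq_sum {t : ℕ} (W : Finset ℕ) (C : Fin t → Finset ℤ)
    (hC : ∀ i, (C i).card ∈ W) :
    Multiset.card (deltaFam C) = ∑ w ∈ W, #{i | (C i).card = w} * w.choose 2 := by
  rw [card_deltaFam, ← sum_fiberwise_of_maps_to (fun i _ => hC i)]
  refine sum_congr rfl fun w _ => sum_const_nat fun i hi => ?_
  rw [(mem_filter.1 hi).2]

theorem exists_image_add_subset_Icc {C : Finset ℤ} {m : ℤ} (hm : 0 ≤ m)
    (h : ∀ d ∈ deltaB C, d ≤ m) :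
    ∃ z, C.image (· + z) ⊆ Icc 1 (m + 1) := by
  rcases C.eq_empty_or_nonempty with rfl | hC
  · exact ⟨0, by simp⟩
  refine ⟨1 - C.min' hC, fun x hx => ?_⟩
  obtain ⟨a, ha, rfl⟩ := mem_image.1 hx
  have hmin := C.min'_le a ha
  have hspread : a - C.min' hC ≤ m := by
    rcases hmin.eq_or_lt with heq | hlt
    · omega
    · exact h _ (mem_deltaB.2 ⟨a, ha, _, C.min'_mem hC, hlt, rfl⟩)
  rw [mem_Icc]; omega

theorem IsNCWSOOC.card_deltaFam_le {n : ℕ} {W : Finset ℕ} {Q : ℕ → ℚ} {M : ℕ}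
    {C : Fin M → Finset ℤ} (hC : IsNCWSOOC n W Q M C) :
    Multiset.card (deltaFam C) ≤ (n - 1) / 2 := by
  obtain ⟨-, -, -, hnodup, hD⟩ := hC
  have hle : deltaFam C ≤ (Icc (1 : ℤ) (((n : ℤ) - 1) / 2)).val := by
    refine (Multiset.le_iff_subset hnodup).2 fun d hd => ?_
    obtain ⟨i, hi⟩ := mem_deltaFam.1 hd
    obtain ⟨a, -, b, -, hba, rfl⟩ := mem_deltaB.1 hi
    have := hD _ hd
    rw [mem_val, mem_Icc]; omega
  have := Multiset.card_le_card hle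
  rw [card_val, Int.card_Icc] at this
  omega

theorem card_deltaFam_eq_of_card_filter_eq {t : ℕ} {W : Finset ℕ} {C C' : Fin t → Finset ℤ}
    (hC : ∀ i, (C i).card ∈ W) (hC' : ∀ i, (C' i).card ∈ W)
    (hcount : ∀ w ∈ W, #{i | (C i).card = w} = #{i | (C' i).card = w}) :
    Multiset.card (deltaFam C) = Multiset.card (deltaFam C') := by
  rw [card_deltaFam_eq_sum W C hC, card_deltaFam_eq_sum W C' hC']
  exact sum_congr rfl fun w hw => by rw [hcount w hw]

theorem stmt19_general (g : ℕ) (hg : Odd g) (hg3 : 3 ≤ g)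
    (W : Finset ℕ)
    (M : ℕ) (B : Fin M → Finset ℤ) (Q : ℕ → ℚ)
    (hsizes : ∀ i, (B i).card ∈ W)
    (hQ : ∀ w ∈ W, ((Finset.univ.filter (fun i => (B i).card = w)).card : ℚ) = Q w * M)
    (hPDF : deltaFam B = (Finset.Icc (1 : ℤ) (((g : ℤ) - 1) / 2)).val) :
    ∃ z : Fin M → ℤ,
      IsNCWSOOC g W Q M (fun i => (B i).image (· + z i)) ∧
      ∀ (n' : ℕ) (C' : Fin M → Finset ℤ), IsNCWSOOC n' W Q M C' → g ≤ n' := by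
  have hg2 := Nat.odd_iff.1 hg
  have hdiff : ∀ d ∈ deltaFam B, 1 ≤ d ∧ d ≤ ((g : ℤ) - 1) / 2 := fun d hd => by
    rwa [hPDF, mem_val, mem_Icc] at hd
  choose z hz using fun i => exists_image_add_subset_Icc (C := B i) (by omega)
    fun d hd => (hdiff d (mem_deltaFam.2 ⟨i, hd⟩)).2
  have hcard (i) : ((B i).image (· + z i)).card = (B i).card :=
    card_image_of_injective _ (add_left_injective _)
  refine ⟨z, ⟨fun i => (hz i).trans (Icc_subset_Icc_right (by omega)), fun i => hcard i ▸ hsizes i,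
    by simpa only [hcard], ?_, fun d hd => ?_⟩, fun n' C' hC' => ?_⟩
  · rw [deltaFam_image_add_right, hPDF]
    exact nodup _
  · rw [deltaFam_image_add_right] at hd
    have := hdiff d hd
    omega
  · have hcount : ∀ w ∈ W, #{i | (C' i).card = w} = #{i | (B i).card = w} := fun w hw => by
      exact_mod_cast (hC'.2.2.1 w hw).trans (hQ w hw).symm
    have := hC'.card_deltaFam_le
    rw [card_deltaFam_eq_of_card_filter_eq hC'.2.1 hsizes hcount, hPDF, card_val,
      Int.card_Icc] at this
    omega

/-- Theorem 4.8.  If there is a `(g,W,1)`-PDF with `M` blocks in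
which, for each `w ∈ W`, the proportion of blocks of size `w` is `Q w`, then its
blocks, translated into subsets of `{1, …, g}`, form a perfect `(g,W,1,Q)`-NCW-SOOC
with `M` codewords: an NCW-SOOC of minimum possible length among all NCW-SOOCs with
`M` codewords and the same weight distribution. -/
theorem stmt19 (g : ℕ) (hg : Odd g) (hg3 : 3 ≤ g)
    (W : Finset ℕ) (hW : ∀ w ∈ W, 2 ≤ w)
    (M : ℕ) (B : Fin M → Finset ℤ) (Q : ℕ → ℚ)
    (hsizes : ∀ i, (B i).card ∈ W)
    (hQ : ∀ w ∈ W, ((Finset.univ.filter (fun i => (B i).card = w)).card : ℚ) = Q w * M)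
    (hPDF : deltaFam B = (Finset.Icc (1 : ℤ) (((g : ℤ) - 1) / 2)).val) :
    ∃ z : Fin M → ℤ,
      IsNCWSOOC g W Q M (fun i => (B i).image (· + z i)) ∧
      ∀ (n' : ℕ) (C' : Fin M → Finset ℤ), IsNCWSOOC n' W Q M C' → g ≤ n' :=
  stmt19_general g hg hg3 W M B Q hsizes hQ hPDF
end
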